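/- Let m, n ∈ ℤ³ \ {0} and a, b ∈ ℝ³ with ⟨a, m⟩ = 0 and ⟨b, n⟩ = 0, and let u(x) := a·cos⟨m,x⟩ + b·sin⟨n,x⟩ (a smooth periodic divergence-free zero-mean vector field on ℝ³). Then 2·B(u) is the field x ↦ cos⟨m−n, x⟩ · P_{m−n}(⟨a,n⟩b − ⟨b,m⟩a) + cos⟨m+n, x⟩ · P_{m+n}(⟨a,n⟩b + ⟨b,m⟩a). -/

import Mathlib

open MeasureTheory Set

noncomputable section

/-- Vector fields on `ℝ³`, with `ℝ³ = Fin 3 → ℝ`. -/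
abbrev V3 := Fin 3 → ℝ

/-- The Euclidean inner product on `ℝ³`. -/
def dot3 (a b : V3) : ℝ := ∑ i, a i * b i

/-- Embedding of `ℤ³` into `ℝ³`. -/
def toR (m : Fin 3 → ℤ) : V3 := fun i => (m i : ℝ)

/-- `2π`-periodic vector field. -/
def PerField (v : V3 → V3) : Prop :=
  ∀ (x : V3) (k : Fin 3 → ℤ), v (x + (2 * Real.pi) • toR k) = v x

/-- `2π`-periodic scalar function. -/
def PerFun (p : V3 → ℝ) : Prop :=
  ∀ (x : V3) (k : Fin 3 → ℤ), p (x + (2 * Real.pi) • toR k) = p x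

/-- The fundamental cell `[0,2π]³`. -/
def Box3 : Set V3 := Set.univ.pi fun _ => Icc (0 : ℝ) (2 * Real.pi)

/-- Divergence-free vector field. -/
def DivFree3 (v : V3 → V3) : Prop :=
  ∀ x, (∑ i, fderiv ℝ v x (Pi.single i 1) i) = 0

/-- Zero mean over the fundamental cell. -/
def ZeroMean3 (v : V3 → V3) : Prop := (∫ x in Box3, v x) = 0

/-- Smooth periodic divergence-free zero-mean vector field. -/
def GoodField (v : V3 → V3) : Prop :=
  ContDiff ℝ (⊤ : ℕ∞) v ∧ PerField v ∧ DivFree3 v ∧ ZeroMean3 v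

/-- The gradient of a scalar function. -/
def grad3 (p : V3 → ℝ) (x : V3) : V3 := fun i => fderiv ℝ p x (Pi.single i 1)

/-- The convective term `⟨u,∇⟩u`, i.e. `x ↦ (Du)(x) (u x)`. -/
def convTerm (u : V3 → V3) (x : V3) : V3 := fderiv ℝ u x (u x)

/-- `w` is the Leray projection `B(u)` of the convective term `⟨u,∇⟩u`: it is a smooth
periodic divergence-free zero-mean field with `⟨u,∇⟩u − w = ∇p` for some smooth
periodic `p`. -/
def IsLeray (u w : V3 → V3) : Prop :=
  GoodField w ∧ ∃ p : V3 → ℝ, ContDiff ℝ (⊤ : ℕ∞) p ∧ PerFun p ∧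
    ∀ x, convTerm u x - w x = grad3 p x

/-- The map `B` (defined by choice; for smooth periodic divergence-free zero-mean `u`
the Leray projection exists and is unique, and `Bop u` is it). -/
def Bop (u : V3 → V3) : V3 → V3 :=
  haveI := Classical.propDecidable (∃ w, IsLeray u w)
  if h : ∃ w, IsLeray u w then h.choose else 0

/-- Orthogonal projection of `ℝ³` onto `ℓ^⊥` (and `0` for `ℓ = 0`). -/
def proj3 (ℓ : V3) (v : V3) : V3 :=
  if ℓ = 0 then 0 else v - (dot3 v ℓ / dot3 ℓ ℓ) • ℓ

/-- The space `E(K)` of trigonometric divergence-free fields with frequencies in `K`: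
finite sums `x ↦ Σ_{ℓ} (a_ℓ cos⟨ℓ,x⟩ + b_ℓ sin⟨ℓ,x⟩)` with `ℓ ∈ K`, `a_ℓ, b_ℓ ⊥ ℓ`. -/
def EK (K : Set (Fin 3 → ℤ)) : Set (V3 → V3) :=
  {v | ∃ (S : Finset (Fin 3 → ℤ)) (a b : (Fin 3 → ℤ) → V3),
    ↑S ⊆ K ∧
    (∀ ℓ ∈ S, dot3 (a ℓ) (toR ℓ) = 0 ∧ dot3 (b ℓ) (toR ℓ) = 0) ∧
    v = fun x => ∑ ℓ ∈ S,
      (Real.cos (dot3 (toR ℓ) x) • a ℓ + Real.sin (dot3 (toR ℓ) x) • b ℓ)}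

/-- The set of fields of the form `η − Σᵢ B(ζⁱ)` with `η, ζⁱ ∈ E`. -/
def Sform (E : Set (V3 → V3)) : Set (V3 → V3) :=
  {η₁ | ∃ (p : ℕ) (η : V3 → V3) (ζ : Fin p → V3 → V3),
    η ∈ E ∧ (∀ i, ζ i ∈ E) ∧ η₁ = η - ∑ i, Bop (ζ i)}

/-- `F(E)`: the largest vector space all of whose elements can be written
`η − Σᵢ B(ζⁱ)` with `η, ζⁱ ∈ E`. -/
def Fop (E : Set (V3 → V3)) : Set (V3 → V3) :=
  {x | ∃ F : Submodule ℝ (V3 → V3), (F : Set (V3 → V3)) ⊆ Sform E ∧ x ∈ F}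

/-- The spaces `E₀(K) = E(K)`, `E_j(K) = F(E_{j−1}(K))`. -/
def Ej (K : Set (Fin 3 → ℤ)) : ℕ → Set (V3 → V3)
  | 0 => EK K
  | j + 1 => Fop (Ej K j)

/-- `E_∞(K) = ⋃_{j≥1} E_j(K)`. -/
def Einf (K : Set (Fin 3 → ℤ)) : Set (V3 → V3) := ⋃ j : ℕ, Ej K (j + 1)

/-- Two integer vectors are non-parallel if neither is a real multiple of the other. -/
def NonParallel (m n : Fin 3 → ℤ) : Prop :=
  (¬ ∃ c : ℝ, toR m = c • toR n) ∧ (¬ ∃ c : ℝ, toR n = c • toR m)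

lemma dot3_comm (a b : V3) : dot3 a b = dot3 b a := by
  simp [dot3, mul_comm]

lemma dot3_add_left (a b c : V3) : dot3 (a + b) c = dot3 a c + dot3 b c := by
  simp [dot3, add_mul, Finset.sum_add_distrib]

lemma dot3_sub_left (a b c : V3) : dot3 (a - b) c = dot3 a c - dot3 b c := by
  simp [dot3, sub_mul, Finset.sum_sub_distrib]

lemma dot3_add_right (a b c : V3) : dot3 a (b + c) = dot3 a b + dot3 a c := by
  simp [dot3, mul_add, Finset.sum_add_distrib]

lemma dot3_sub_right (a b c : V3) : dot3 a (b - c) = dot3 a b - dot3 a c := by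
  simp [dot3, mul_sub, Finset.sum_sub_distrib]

lemma dot3_smul_right (r : ℝ) (a b : V3) : dot3 a (r • b) = r * dot3 a b := by
  simp only [dot3, Finset.mul_sum, Pi.smul_apply, smul_eq_mul]
  exact Finset.sum_congr rfl fun i _ => by ring

lemma dot3_smul_left (r : ℝ) (a b : V3) : dot3 (r • a) b = r * dot3 a b := by
  simp only [dot3, Finset.mul_sum, Pi.smul_apply, smul_eq_mul]
  exact Finset.sum_congr rfl fun i _ => by ring

lemma dot3_neg_right (a b : V3) : dot3 a (-b) = -dot3 a b := by
  simp [dot3, Finset.sum_neg_distrib]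

lemma dot3_zero_left (b : V3) : dot3 0 b = 0 := by simp [dot3]
lemma dot3_zero_right (a : V3) : dot3 a 0 = 0 := by simp [dot3]

lemma dot3_single (L : V3) (i : Fin 3) : dot3 L (Pi.single i 1) = L i := by
  simp [dot3, Pi.single_apply]

lemma dot3_self_pos {L : V3} (h : L ≠ 0) : 0 < dot3 L L := by
  rcases Function.ne_iff.1 h with ⟨j, hj⟩
  have hj2 : L j ≠ 0 := by simpa using hj
  have hjj : (0:ℝ) < L j * L j := mul_self_pos.mpr hj2
  have : ∀ i ∈ Finset.univ, (0:ℝ) ≤ L i * L i := fun i _ => mul_self_nonneg _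
  exact Finset.sum_pos' this ⟨j, Finset.mem_univ j, hjj⟩

lemma toR_sub (m n : Fin 3 → ℤ) : toR (m - n) = toR m - toR n := by
  funext i; simp [toR]

lemma toR_add (m n : Fin 3 → ℤ) : toR (m + n) = toR m + toR n := by
  funext i; simp [toR]

lemma toR_zero : toR 0 = 0 := by funext i; simp [toR]

lemma dot3_toR (l k : Fin 3 → ℤ) : dot3 (toR l) (toR k) = ((∑ i, l i * k i : ℤ) : ℝ) := by
  simp [dot3, toR]

lemma dot3_per (l : Fin 3 → ℤ) (x : V3) (k : Fin 3 → ℤ) :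
    dot3 (toR l) (x + (2 * Real.pi) • toR k)
      = dot3 (toR l) x + (∑ i, l i * k i : ℤ) * (2 * Real.pi) := by
  rw [dot3_add_right, dot3_smul_right, dot3_toR]; ring

lemma cos_per (l : Fin 3 → ℤ) (x : V3) (k : Fin 3 → ℤ) :
    Real.cos (dot3 (toR l) (x + (2 * Real.pi) • toR k)) = Real.cos (dot3 (toR l) x) := by
  rw [dot3_per, Real.cos_add_int_mul_two_pi]

lemma sin_per (l : Fin 3 → ℤ) (x : V3) (k : Fin 3 → ℤ) :
    Real.sin (dot3 (toR l) (x + (2 * Real.pi) • toR k)) = Real.sin (dot3 (toR l) x) := by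
  rw [dot3_per, Real.sin_add_int_mul_two_pi]

lemma contDiff_dot3 (L : V3) : ContDiff ℝ (⊤ : ℕ∞) (fun x : V3 => dot3 L x) := by
  unfold dot3
  exact ContDiff.sum fun i _ => contDiff_const.mul (contDiff_apply ℝ ℝ i)

lemma contDiff_cos_smul (L c : V3) :
    ContDiff ℝ (⊤ : ℕ∞) (fun x : V3 => Real.cos (dot3 L x) • c) :=
  (Real.contDiff_cos.comp (contDiff_dot3 L)).smul contDiff_const

lemma contDiff_sin_smul (L c : V3) :
    ContDiff ℝ (⊤ : ℕ∞) (fun x : V3 => Real.sin (dot3 L x) • c) :=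
  (Real.contDiff_sin.comp (contDiff_dot3 L)).smul contDiff_const

def dotCLM (L : V3) : V3 →L[ℝ] ℝ := ∑ i, L i • (ContinuousLinearMap.proj i : V3 →L[ℝ] ℝ)

lemma dotCLM_apply (L x : V3) : dotCLM L x = dot3 L x := by
  simp [dotCLM, dot3]

lemma hasFDerivAt_dot3 (L x : V3) : HasFDerivAt (fun y => dot3 L y) (dotCLM L) x := by
  have := (dotCLM L).hasFDerivAt (x := x)
  simpa [funext fun y => (dotCLM_apply L y)] using this

lemma hasFDerivAt_cos_smul (L c x : V3) :
    HasFDerivAt (fun y => Real.cos (dot3 L y) • c)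
      (((-Real.sin (dot3 L x)) • dotCLM L).smulRight c) x :=
  ((Real.hasDerivAt_cos (dot3 L x)).comp_hasFDerivAt x (hasFDerivAt_dot3 L x)).smul_const c

lemma hasFDerivAt_sin_smul (L c x : V3) :
    HasFDerivAt (fun y => Real.sin (dot3 L y) • c)
      ((Real.cos (dot3 L x) • dotCLM L).smulRight c) x :=
  ((Real.hasDerivAt_sin (dot3 L x)).comp_hasFDerivAt x (hasFDerivAt_dot3 L x)).smul_const c

lemma hasFDerivAt_const_mul_sin (r : ℝ) (L x : V3) :
    HasFDerivAt (fun y => r * Real.sin (dot3 L y)) ((r * Real.cos (dot3 L x)) • dotCLM L) x := by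
  have := ((Real.hasDerivAt_sin (dot3 L x)).comp_hasFDerivAt x (hasFDerivAt_dot3 L x)).const_mul r
  simpa [smul_smul] using this

lemma box3_compact : IsCompact Box3 := isCompact_univ_pi fun _ => isCompact_Icc
lemma box3_meas : MeasurableSet Box3 := MeasurableSet.univ_pi fun _ => measurableSet_Icc

lemma continuous_dot3 (L : V3) : Continuous (fun x : V3 => dot3 L x) := by
  unfold dot3; exact continuous_finset_sum _ fun i _ => (continuous_const.mul (continuous_apply i))

lemma integral_exp_factor {k : ℤ} (hk : k ≠ 0) :
    (∫ t in Icc (0:ℝ) (2 * Real.pi), Complex.exp ((k : ℂ) * t * Complex.I)) = 0 := by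
  have h2 : (0:ℝ) ≤ 2 * Real.pi := by positivity
  have hc : ((k : ℂ) * Complex.I) ≠ 0 := by
    simp [Complex.ext_iff, hk]
  rw [MeasureTheory.integral_Icc_eq_integral_Ioc,
    ← intervalIntegral.integral_of_le h2]
  have : ∀ t : ℝ, (k : ℂ) * t * Complex.I = ((k:ℂ) * Complex.I) * t := fun t => by ring
  simp_rw [this]
  rw [integral_exp_mul_complex hc]
  have h1 : (k : ℂ) * Complex.I * (2 * Real.pi : ℝ) = (k : ℤ) * (2 * Real.pi * Complex.I) := by
    push_cast; ring
  rw [h1, Complex.exp_int_mul_two_pi_mul_I]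
  simp

lemma integral_cos_box {l : Fin 3 → ℤ} (hl : l ≠ 0) :
    (∫ x in Box3, Real.cos (dot3 (toR l) x)) = 0 := by
  have hcont : Continuous (fun x : V3 => Complex.exp ((dot3 (toR l) x : ℂ) * Complex.I)) := by
    exact Complex.continuous_exp.comp
      ((Complex.continuous_ofReal.comp (continuous_dot3 _)).mul continuous_const)
  have hint : IntegrableOn (fun x : V3 => Complex.exp ((dot3 (toR l) x : ℂ) * Complex.I))
      Box3 volume :=
    hcont.continuousOn.integrableOn_compact box3_compact
  have hre : ∀ x : V3, Real.cos (dot3 (toR l) x)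
      = (Complex.exp ((dot3 (toR l) x : ℂ) * Complex.I)).re := by
    intro x; rw [Complex.exp_ofReal_mul_I_re]
  calc (∫ x in Box3, Real.cos (dot3 (toR l) x))
      = (∫ x in Box3, Complex.exp ((dot3 (toR l) x : ℂ) * Complex.I)).re := by
        simp_rw [hre]; exact integral_re hint
    _ = 0 := by
        rw [← MeasureTheory.integral_indicator box3_meas]
        have key : (Box3.indicator fun x => Complex.exp ((dot3 (toR l) x : ℂ) * Complex.I))
            = fun x => ∏ i, (Icc (0:ℝ) (2*Real.pi)).indicator
                (fun t => Complex.exp ((l i : ℂ) * t * Complex.I)) (x i) := by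
          funext x
          by_cases hx : x ∈ Box3
          · rw [Set.indicator_of_mem hx]
            have hxi : ∀ i, x i ∈ Icc (0:ℝ) (2*Real.pi) := fun i => hx i (Set.mem_univ i)
            have : ∀ i, (Icc (0:ℝ) (2*Real.pi)).indicator
                (fun t => Complex.exp ((l i : ℂ) * t * Complex.I)) (x i)
                = Complex.exp ((l i : ℂ) * (x i) * Complex.I) :=
              fun i => Set.indicator_of_mem (hxi i) _
            simp_rw [this, ← Complex.exp_sum]
            congr 1
            simp [dot3, toR, Finset.sum_mul]
          · rw [Set.indicator_of_notMem hx]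
            obtain ⟨i, -, hi⟩ : ∃ i ∈ Finset.univ, x i ∉ Icc (0:ℝ) (2*Real.pi) := by
              by_contra hcon
              push_neg at hcon
              exact hx fun i _ => hcon i (Finset.mem_univ i)
            symm
            apply Finset.prod_eq_zero (Finset.mem_univ i)
            exact Set.indicator_of_notMem hi _
        rw [key, MeasureTheory.integral_fintype_prod_volume_eq_prod (𝕜 := ℂ)
          (f := fun i (t:ℝ) => (Icc (0:ℝ) (2*Real.pi)).indicator
            (fun t => Complex.exp ((l i : ℂ) * t * Complex.I)) t)]
        obtain ⟨j, hj⟩ := Function.ne_iff.1 hl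
        have hj' : l j ≠ 0 := by simpa using hj
        have : (∫ t : ℝ, (Icc (0:ℝ) (2*Real.pi)).indicator
            (fun t => Complex.exp ((l j : ℂ) * t * Complex.I)) t) = 0 := by
          rw [MeasureTheory.integral_indicator measurableSet_Icc]
          exact integral_exp_factor hj'
        rw [Finset.prod_eq_zero (Finset.mem_univ j) this]
        simp

lemma integral_cos_smul_box (l : Fin 3 → ℤ) (c : V3) (hc : toR l = 0 → c = 0) :
    (∫ x in Box3, Real.cos (dot3 (toR l) x) • c) = 0 := by
  by_cases hl : l = 0
  · have h0 : toR l = 0 := by subst hl; exact toR_zero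
    simp [hc h0]
  · rw [integral_smul_const, integral_cos_box hl, zero_smul]

/-- The component of `c` orthogonal to `L` (as a formula). -/
def lerayV (L c : V3) : V3 := c - (dot3 c L / dot3 L L) • L

lemma lerayV_perp (L c : V3) : dot3 (lerayV L c) L = 0 := by
  by_cases h : L = 0
  · simp [lerayV, h, dot3_zero_right, dot3_sub_left]
  · have hL : dot3 L L ≠ 0 := (dot3_self_pos h).ne'
    rw [lerayV, dot3_sub_left, dot3_smul_left, div_mul_cancel₀ _ hL, sub_self]

lemma lerayV_zero_of (L c : V3) (h : c = 0) : lerayV L c = 0 := by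
  subst h; simp [lerayV, dot3_zero_left]

lemma proj3_eq_lerayV {L c : V3} (h0 : L = 0 → c = 0) : proj3 L c = lerayV L c := by
  by_cases h : L = 0
  · rw [proj3, if_pos h, lerayV, h0 h, h]
    simp [dot3_zero_left]
  · rw [proj3, if_neg h, lerayV]

lemma divfree_aux (s : ℝ) (L d : V3) (h : dot3 d L = 0) :
    ∑ i, (s * L i) * d i = 0 := by
  have : ∑ i, (s * L i) * d i = s * dot3 L d := by
    rw [dot3, Finset.mul_sum]
    exact Finset.sum_congr rfl fun i _ => by ring
  rw [this, dot3_comm, h, mul_zero]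

theorem Bop_cos_sin' (m n : Fin 3 → ℤ) (a b : V3)
    (ha : dot3 a (toR m) = 0) (hb : dot3 b (toR n) = 0) :
    ∃ w : V3 → V3,
      IsLeray (fun x => Real.cos (dot3 (toR m) x) • a + Real.sin (dot3 (toR n) x) • b) w ∧
      ∀ x, (2 : ℝ) • w x =
        Real.cos (dot3 (toR (m - n)) x) •
          proj3 (toR (m - n)) (dot3 a (toR n) • b - dot3 b (toR m) • a) +
        Real.cos (dot3 (toR (m + n)) x) •
          proj3 (toR (m + n)) (dot3 a (toR n) • b + dot3 b (toR m) • a) := by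
  classical
  set α : ℝ := dot3 a (toR n) with hα
  set β : ℝ := dot3 b (toR m) with hβ
  set c1 : V3 := α • b - β • a with hc1def
  set c2 : V3 := α • b + β • a with hc2def
  -- degenerate cases
  have hc1zero : toR (m - n) = 0 → c1 = 0 := by
    intro h
    have he : toR m = toR n := by
      have := h; rw [toR_sub] at this; exact sub_eq_zero.mp this
    have h1 : α = 0 := by rw [hα, ← he]; exact ha
    have h2 : β = 0 := by rw [hβ, he]; exact hb
    rw [hc1def, h1, h2]; simp
  have hc2zero : toR (m + n) = 0 → c2 = 0 := by
    intro h
    have he : toR n = -toR m := by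
      have := h; rw [toR_add] at this; linear_combination (norm := module) this
    have h1 : α = 0 := by rw [hα, he, dot3_neg_right, ha, neg_zero]
    have h2 : β = 0 := by
      have : dot3 b (toR n) = -dot3 b (toR m) := by rw [he, dot3_neg_right]
      rw [hβ]; rw [this] at hb; linarith
    rw [hc2def, h1, h2]; simp
  set L1 : V3 := toR (m - n) with hL1
  set L2 : V3 := toR (m + n) with hL2
  set d1 : V3 := (2⁻¹ : ℝ) • lerayV L1 c1 with hd1
  set d2 : V3 := (2⁻¹ : ℝ) • lerayV L2 c2 with hd2
  have hd1zero : toR (m - n) = 0 → d1 = 0 := fun h => by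
    rw [hd1, lerayV_zero_of _ _ (hc1zero h), smul_zero]
  have hd2zero : toR (m + n) = 0 → d2 = 0 := fun h => by
    rw [hd2, lerayV_zero_of _ _ (hc2zero h), smul_zero]
  set q1 : ℝ := dot3 c1 L1 / dot3 L1 L1 with hq1
  set q2 : ℝ := dot3 c2 L2 / dot3 L2 L2 with hq2
  refine ⟨fun x => Real.cos (dot3 L1 x) • d1 + Real.cos (dot3 L2 x) • d2,
    ⟨⟨?_, ?_, ?_, ?_⟩,
      fun x => (2⁻¹ * q1) * Real.sin (dot3 L1 x) + (2⁻¹ * q2) * Real.sin (dot3 L2 x),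
      ?_, ?_, ?_⟩, ?_⟩
  · -- smooth
    exact (contDiff_cos_smul L1 d1).add (contDiff_cos_smul L2 d2)
  · -- periodic
    intro x k
    simp only [hL1, hL2, cos_per]
  · -- div free
    intro x
    have hw : HasFDerivAt (fun y => Real.cos (dot3 L1 y) • d1 + Real.cos (dot3 L2 y) • d2) _ x :=
      (hasFDerivAt_cos_smul L1 d1 x).add (hasFDerivAt_cos_smul L2 d2 x)
    simp only [hw.fderiv, ContinuousLinearMap.add_apply, ContinuousLinearMap.coe_smul',
      ContinuousLinearMap.smulRight_apply, ContinuousLinearMap.smul_apply, dotCLM_apply,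
      dot3_single, smul_eq_mul, Pi.add_apply, Pi.smul_apply]
    rw [Finset.sum_add_distrib]
    have e1 : dot3 d1 L1 = 0 := by
      rw [hd1, dot3_smul_left, lerayV_perp, mul_zero]
    have e2 : dot3 d2 L2 = 0 := by
      rw [hd2, dot3_smul_left, lerayV_perp, mul_zero]
    rw [divfree_aux _ _ _ e1, divfree_aux _ _ _ e2, add_zero]
  · -- zero mean
    unfold ZeroMean3
    rw [MeasureTheory.integral_add
      (((contDiff_cos_smul L1 d1).continuous).continuousOn.integrableOn_compact box3_compact)
      (((contDiff_cos_smul L2 d2).continuous).continuousOn.integrableOn_compact box3_compact)]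
    rw [hL1, hL2, integral_cos_smul_box _ _ hd1zero, integral_cos_smul_box _ _ hd2zero, add_zero]
  · -- p smooth
    exact ((contDiff_const.mul (Real.contDiff_sin.comp (contDiff_dot3 L1)))).add
      ((contDiff_const.mul (Real.contDiff_sin.comp (contDiff_dot3 L2))))
  · -- p periodic
    intro x k
    simp only [hL1, hL2, sin_per]
  · -- gradient identity
    intro x
    funext i
    have hu : HasFDerivAt (fun y => Real.cos (dot3 (toR m) y) • a + Real.sin (dot3 (toR n) y) • b) _ x :=
      (hasFDerivAt_cos_smul (toR m) a x).add (hasFDerivAt_sin_smul (toR n) b x)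
    have hp : HasFDerivAt (fun y => 2⁻¹ * q1 * Real.sin (dot3 L1 y) + 2⁻¹ * q2 * Real.sin (dot3 L2 y)) _ x :=
      (hasFDerivAt_const_mul_sin (2⁻¹ * q1) L1 x).add
      (hasFDerivAt_const_mul_sin (2⁻¹ * q2) L2 x)
    rw [Pi.sub_apply]
    unfold convTerm grad3
    rw [hu.fderiv, hp.fderiv]
    simp only [ContinuousLinearMap.add_apply, ContinuousLinearMap.coe_smul',
      ContinuousLinearMap.smulRight_apply, ContinuousLinearMap.smul_apply, dotCLM_apply,
      dot3_single, smul_eq_mul, Pi.add_apply, Pi.smul_apply, Pi.sub_apply]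
    have hMu : dot3 (toR m) (Real.cos (dot3 (toR m) x) • a + Real.sin (dot3 (toR n) x) • b)
        = Real.sin (dot3 (toR n) x) * β := by
      rw [dot3_add_right, dot3_smul_right, dot3_smul_right, dot3_comm (toR m) a, ha,
        dot3_comm (toR m) b, ← hβ, mul_zero, zero_add]
    have hNu : dot3 (toR n) (Real.cos (dot3 (toR m) x) • a + Real.sin (dot3 (toR n) x) • b)
        = Real.cos (dot3 (toR m) x) * α := by
      rw [dot3_add_right, dot3_smul_right, dot3_smul_right, dot3_comm (toR n) b, hb,
        dot3_comm (toR n) a, ← hα, mul_zero, add_zero]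
    rw [hMu, hNu]
    have hcos1 : Real.cos (dot3 L1 x)
        = Real.cos (dot3 (toR m) x) * Real.cos (dot3 (toR n) x)
          + Real.sin (dot3 (toR m) x) * Real.sin (dot3 (toR n) x) := by
      rw [hL1, toR_sub, dot3_sub_left, Real.cos_sub]
    have hcos2 : Real.cos (dot3 L2 x)
        = Real.cos (dot3 (toR m) x) * Real.cos (dot3 (toR n) x)
          - Real.sin (dot3 (toR m) x) * Real.sin (dot3 (toR n) x) := by
      rw [hL2, toR_add, dot3_add_left, Real.cos_add]
    have hd1i : d1 i = 2⁻¹ * (α * b i - β * a i - q1 * L1 i) := by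
      rw [hd1, hq1, hc1def]
      simp [lerayV, Pi.smul_apply, Pi.sub_apply, smul_eq_mul]
    have hd2i : d2 i = 2⁻¹ * (α * b i + β * a i - q2 * L2 i) := by
      rw [hd2, hq2, hc2def]
      simp [lerayV, Pi.smul_apply, Pi.add_apply, Pi.sub_apply, smul_eq_mul]
    rw [hcos1, hcos2, hd1i, hd2i]
    ring
  · -- the final formula
    intro x
    have e1 : proj3 (toR (m - n)) (dot3 a (toR n) • b - dot3 b (toR m) • a)
        = lerayV L1 c1 := by
      rw [← hα, ← hβ, ← hc1def, ← hL1]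
      exact proj3_eq_lerayV (fun h => hc1zero (by rwa [hL1] at h))
    have e2 : proj3 (toR (m + n)) (dot3 a (toR n) • b + dot3 b (toR m) • a)
        = lerayV L2 c2 := by
      rw [← hα, ← hβ, ← hc2def, ← hL2]
      exact proj3_eq_lerayV (fun h => hc2zero (by rwa [hL2] at h))
    rw [e1, e2]
    rw [smul_add, hd1, hd2, smul_smul, smul_smul, smul_smul, smul_smul]
    module

/-- For `u(x) = a cos⟨m,x⟩ + b sin⟨n,x⟩` with `a ⊥ m`, `b ⊥ n`,
the Leray projection `B(u)` of `⟨u,∇⟩u` exists and satisfies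
`2 B(u)(x) = cos⟨m−n,x⟩ P_{m−n}(⟨a,n⟩b − ⟨b,m⟩a) + cos⟨m+n,x⟩ P_{m+n}(⟨a,n⟩b + ⟨b,m⟩a)`. -/
theorem Bop_cos_sin (m n : Fin 3 → ℤ) (hm : m ≠ 0) (hn : n ≠ 0) (a b : V3)
    (ha : dot3 a (toR m) = 0) (hb : dot3 b (toR n) = 0) :
    ∃ w : V3 → V3,
      IsLeray (fun x => Real.cos (dot3 (toR m) x) • a + Real.sin (dot3 (toR n) x) • b) w ∧
      ∀ x, (2 : ℝ) • w x =
        Real.cos (dot3 (toR (m - n)) x) •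
          proj3 (toR (m - n)) (dot3 a (toR n) • b - dot3 b (toR m) • a) +
        Real.cos (dot3 (toR (m + n)) x) •
          proj3 (toR (m + n)) (dot3 a (toR n) • b + dot3 b (toR m) • a) :=
  Bop_cos_sin' m n a b ha hb
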